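/- Let I be a finite index set partitioned into blocks J⁽¹⁾,…,J⁽q⁾ and let Θ ∈ ℝ^{I×I} be symmetric positive definite. For 1 ≤ k ≤ q write Θ⁽ᵏ⁾ := Θ restricted to (J⁽¹⁾∪⋯∪J⁽ᵏ⁾)², A⁽ᵏ⁾ := (Θ⁽ᵏ⁾)⁻¹, B⁽ᵏ⁾ := A⁽ᵏ⁾_{k,k}. Let H ∈ (0,1) and C_Φ ≥ 1 be constants such that: λ_min(Θ⁽ᵏ⁾) ≥ H^{2k}/C_Φ for all 1 ≤ k ≤ q; λ_max(Θ_{l,l}) ≤ C_Φ for all 1 ≤ l ≤ q; and λ_max(Θ_{l,l} − Θ_{l,1:k} (Θ_{1:k,1:k})⁻¹ Θ_{1:k,l}) ≤ C_Φ H^{2k} for all 1 ≤ k < l ≤ q. Then for every 1 ≤ k ≤ q one has C_Φ⁻¹ H^{−2(k−1)} Id ≼ B⁽ᵏ⁾ ≼ C_Φ H^{−2k} Id (in the Loewner order), and consequently the condition number of B⁽ᵏ⁾ satisfies cond(B⁽ᵏ⁾) := λ_max(B⁽ᵏ⁾)/λ_min(B⁽ᵏ⁾) ≤ κ := H^{−2}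 C_Φ². -/

import Mathlib

open Matrix

variable {N q : ℕ}

/-- `Θ⁽ᵏ⁾`: the restriction of `Θ` to `I⁽ᵏ⁾ = J⁽¹⁾ ∪ ⋯ ∪ J⁽ᵏ⁾`, the blocks being
the level sets of `b : Fin N → Fin q`. -/
noncomputable def thetaK (b : Fin N → Fin q) (Θ : Matrix (Fin N) (Fin N) ℝ) (k : Fin q) :
    Matrix {i : Fin N // b i ≤ k} {i : Fin N // b i ≤ k} ℝ :=
  Θ.submatrix Subtype.val Subtype.val

/-- `A⁽ᵏ⁾ := (Θ⁽ᵏ⁾)⁻¹`. -/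
noncomputable def AK (b : Fin N → Fin q) (Θ : Matrix (Fin N) (Fin N) ℝ) (k : Fin q) :
    Matrix {i : Fin N // b i ≤ k} {i : Fin N // b i ≤ k} ℝ :=
  (thetaK b Θ k)⁻¹

/-- `B⁽ᵏ⁾ := A⁽ᵏ⁾_{k,k}`, the `(k,k)` block of `A⁽ᵏ⁾`. -/
noncomputable def BK (b : Fin N → Fin q) (Θ : Matrix (Fin N) (Fin N) ℝ) (k : Fin q) :
    Matrix {i : Fin N // b i = k} {i : Fin N // b i = k} ℝ :=
  fun i j => AK b Θ k ⟨i.1, i.2.le⟩ ⟨j.1, j.2.le⟩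

/-- The Schur complement `Θ_{l,l} − Θ_{l,1:k} (Θ_{1:k,1:k})⁻¹ Θ_{1:k,l}`. -/
noncomputable def schurLK (b : Fin N → Fin q) (Θ : Matrix (Fin N) (Fin N) ℝ) (k l : Fin q) :
    Matrix {i : Fin N // b i = l} {i : Fin N // b i = l} ℝ :=
  Θ.submatrix Subtype.val Subtype.val -
    Θ.submatrix (Subtype.val : {i : Fin N // b i = l} → Fin N)
        (Subtype.val : {i : Fin N // b i ≤ k} → Fin N) *
      (thetaK b Θ k)⁻¹ *
      Θ.submatrix (Subtype.val : {i : Fin N // b i ≤ k} → Fin N)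
        (Subtype.val : {i : Fin N // b i = l} → Fin N)

/-!
Write `B⁽ᵏ⁾ = Eᵀ (Θ⁽ᵏ⁾)⁻¹ E`, where `E` extends vectors on `J⁽ᵏ⁾` by zero to `I⁽ᵏ⁾`. For positive
definite `M`, `uᵀ M⁻¹ u = max_y (2 u·y - yᵀ M y)`. Bounding `M = Θ⁽ᵏ⁾` below by
`λ_min(Θ⁽ᵏ⁾) Id` gives the upper bound on `B⁽ᵏ⁾`. For the lower bound, a test vector `y` with
`(E x)·y = |x|²` suffices: `xᵀ B⁽ᵏ⁾ x ≥ |x|² / D` as soon as `yᵀ Θ⁽ᵏ⁾ y ≤ D |x|²`. On the first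
block take `y = E x`, so that `yᵀ Θ⁽ᵏ⁾ y = xᵀ Θ_{k,k} x`; on later blocks subtract from `E x` the
vector `(Θ⁽ᵏ⁻¹⁾)⁻¹ Θ_{1:k-1,k} x` on the earlier blocks, which makes `yᵀ Θ⁽ᵏ⁾ y` the quadratic form
of the Schur complement of `Θ⁽ᵏ⁻¹⁾` at `x`. The condition number bound is the ratio of the two
bounds.
-/

namespace Matrix

variable {m n p : Type*} [Fintype n]

section QuadraticForm

variable {B M : Matrix n n ℝ} {c : ℝ}

theorem IsHermitian.dotProduct_mulVec_comm (hM : M.IsHermitian) (u v : n → ℝ) :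
    u ⬝ᵥ (M *ᵥ v) = v ⬝ᵥ (M *ᵥ u) := by
  rw [dotProduct_mulVec, ← mulVec_transpose, ← conjTranspose_eq_transpose_of_trivial, hM.eq,
    dotProduct_comm]

theorem dotProduct_mulVec_le_div_mul_of_bounds {d : ℝ} (hc : 0 < c)
    (hlow : ∀ x, c * (x ⬝ᵥ x) ≤ x ⬝ᵥ (B *ᵥ x)) (hup : ∀ x, x ⬝ᵥ (B *ᵥ x) ≤ d * (x ⬝ᵥ x))
    {x y : n → ℝ} (hx : x ⬝ᵥ x = 1) (hy : y ⬝ᵥ y = 1) :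
    x ⬝ᵥ (B *ᵥ x) ≤ d / c * (y ⬝ᵥ (B *ᵥ y)) := by
  have hxd : x ⬝ᵥ (B *ᵥ x) ≤ d := by simpa [hx] using hup x
  have hcy : c ≤ y ⬝ᵥ (B *ᵥ y) := by simpa [hy] using hlow y
  have hcx : c ≤ x ⬝ᵥ (B *ᵥ x) := by simpa [hx] using hlow x
  calc x ⬝ᵥ (B *ᵥ x) ≤ d / c * c := by rwa [div_mul_cancel₀ d hc.ne']
    _ ≤ d / c * (y ⬝ᵥ (B *ᵥ y)) :=
      mul_le_mul_of_nonneg_left hcy (div_nonneg (by linarith) hc.le)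

variable [DecidableEq n]

theorem dotProduct_sub_smul_one_mulVec (B : Matrix n n ℝ) (c : ℝ) (x : n → ℝ) :
    x ⬝ᵥ ((B - c • 1) *ᵥ x) = x ⬝ᵥ (B *ᵥ x) - c * (x ⬝ᵥ x) := by
  simp [sub_mulVec, smul_mulVec, dotProduct_sub]

theorem dotProduct_smul_one_sub_mulVec (B : Matrix n n ℝ) (c : ℝ) (x : n → ℝ) :
    x ⬝ᵥ ((c • 1 - B) *ᵥ x) = c * (x ⬝ᵥ x) - x ⬝ᵥ (B *ᵥ x) := by
  simp [sub_mulVec, smul_mulVec, dotProduct_sub]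

theorem PosSemidef.le_dotProduct_mulVec_of_sub_smul_one (h : (B - c • 1).PosSemidef)
    (x : n → ℝ) : c * (x ⬝ᵥ x) ≤ x ⬝ᵥ (B *ᵥ x) := by
  have := h.dotProduct_mulVec_nonneg x
  rw [star_trivial, dotProduct_sub_smul_one_mulVec] at this
  linarith

theorem PosSemidef.dotProduct_mulVec_le_of_smul_one_sub (h : (c • 1 - B).PosSemidef)
    (x : n → ℝ) : x ⬝ᵥ (B *ᵥ x) ≤ c * (x ⬝ᵥ x) := by
  have := h.dotProduct_mulVec_nonneg x
  rw [star_trivial, dotProduct_smul_one_sub_mulVec] at this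
  linarith

theorem IsHermitian.posSemidef_sub_smul_one (hB : B.IsHermitian)
    (h : ∀ x, c * (x ⬝ᵥ x) ≤ x ⬝ᵥ (B *ᵥ x)) : (B - c • 1).PosSemidef :=
  .of_dotProduct_mulVec_nonneg (hB.sub (isHermitian_one.smul (IsSelfAdjoint.all c))) fun x => by
    rw [star_trivial, dotProduct_sub_smul_one_mulVec]
    linarith [h x]

theorem IsHermitian.posSemidef_smul_one_sub (hB : B.IsHermitian)
    (h : ∀ x, x ⬝ᵥ (B *ᵥ x) ≤ c * (x ⬝ᵥ x)) : (c • 1 - B).PosSemidef :=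
  .of_dotProduct_mulVec_nonneg ((isHermitian_one.smul (IsSelfAdjoint.all c)).sub hB) fun x => by
    rw [star_trivial, dotProduct_smul_one_sub_mulVec]
    linarith [h x]

theorem PosDef.mulVec_inv_mulVec (hM : M.PosDef) (u : n → ℝ) : M *ᵥ (M⁻¹ *ᵥ u) = u := by
  rw [mulVec_mulVec, mul_nonsing_inv _ (isUnit_iff_isUnit_det M |>.mp hM.isUnit), one_mulVec]

/-- `u ⬝ᵥ M⁻¹ u` is the maximum of `2 u ⬝ᵥ y - y ⬝ᵥ M y`, attained at `y = M⁻¹ u`. -/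
theorem PosDef.two_mul_dotProduct_sub_le (hM : M.PosDef) (u y : n → ℝ) :
    2 * (u ⬝ᵥ y) - y ⬝ᵥ (M *ᵥ y) ≤ u ⬝ᵥ (M⁻¹ *ᵥ u) := by
  set v := M⁻¹ *ᵥ u
  have hv : M *ᵥ v = u := hM.mulVec_inv_mulVec u
  have hsq := hM.posSemidef.dotProduct_mulVec_nonneg (y - v)
  rw [star_trivial, mulVec_sub, sub_dotProduct, dotProduct_sub, dotProduct_sub,
    hM.isHermitian.dotProduct_mulVec_comm v y, hv, dotProduct_comm y u, dotProduct_comm v u] at hsq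
  linarith

theorem PosDef.dotProduct_inv_mulVec_le (hM : M.PosDef) (hc : 0 < c)
    (h : (M - c • 1).PosSemidef) (u : n → ℝ) : u ⬝ᵥ (M⁻¹ *ᵥ u) ≤ c⁻¹ * (u ⬝ᵥ u) := by
  set v := M⁻¹ *ᵥ u
  have hv : M *ᵥ v = u := hM.mulVec_inv_mulVec u
  have hlow := h.le_dotProduct_mulVec_of_sub_smul_one v
  have hsq : 0 ≤ (u - c • v) ⬝ᵥ (u - c • v) := dotProduct_self_star_nonneg _
  rw [hv, dotProduct_comm v u] at hlow
  simp only [sub_dotProduct, dotProduct_sub, smul_dotProduct, dotProduct_smul, smul_eq_mul,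
    dotProduct_comm v u] at hsq
  rw [le_inv_mul_iff₀ hc]
  nlinarith [mul_le_mul_of_nonneg_left hlow hc.le]

theorem PosDef.le_dotProduct_inv_mulVec (hM : M.PosDef) {u y : n → ℝ} {a D : ℝ} (hD : 0 < D)
    (hu : u ⬝ᵥ y = a) (hy : y ⬝ᵥ (M *ᵥ y) ≤ D * a) : D⁻¹ * a ≤ u ⬝ᵥ (M⁻¹ *ᵥ u) := by
  have key := hM.two_mul_dotProduct_sub_le u (D⁻¹ • y)
  have hyD : D⁻¹ * (y ⬝ᵥ (M *ᵥ y)) ≤ a := by rwa [inv_mul_le_iff₀ hD]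
  simp only [mulVec_smul, dotProduct_smul, smul_dotProduct, smul_eq_mul, hu] at key
  nlinarith [mul_le_mul_of_nonneg_left hyD (inv_nonneg.mpr hD.le)]

end QuadraticForm

section ExtendByZero

/-! `(1 : Matrix n n ℝ).submatrix id f *ᵥ x` is `x` transported along `f` and extended by zero. -/

variable [DecidableEq n]

theorem transpose_submatrix_one_mul_mul (A : Matrix n n ℝ) (f : m → n) (g : p → n) :
    ((1 : Matrix n n ℝ).submatrix id f)ᵀ * A * (1 : Matrix n n ℝ).submatrix id g =
      A.submatrix f g := by
  ext i j
  simp [mul_apply, one_apply]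

variable [Fintype m] [Fintype p]

theorem dotProduct_submatrix_mulVec (A : Matrix n n ℝ) (f : m → n) (g : p → n) (x : m → ℝ)
    (w : p → ℝ) :
    x ⬝ᵥ (A.submatrix f g *ᵥ w) =
      ((1 : Matrix n n ℝ).submatrix id f *ᵥ x) ⬝ᵥ
        (A *ᵥ ((1 : Matrix n n ℝ).submatrix id g *ᵥ w)) := by
  rw [← transpose_submatrix_one_mul_mul, ← mulVec_mulVec, ← mulVec_mulVec, dotProduct_mulVec,
    vecMul_transpose]

variable [DecidableEq m] [DecidableEq p]

theorem submatrix_one_mulVec_dotProduct_self {f : m → n} (hf : Function.Injective f)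
    (x : m → ℝ) :
    ((1 : Matrix n n ℝ).submatrix id f *ᵥ x) ⬝ᵥ ((1 : Matrix n n ℝ).submatrix id f *ᵥ x) =
      x ⬝ᵥ x := by
  simpa [submatrix_one _ hf] using (dotProduct_submatrix_mulVec 1 f f x x).symm

/-- The witness is `y = x - M_{g,g}⁻¹ M_{g,f} x`, extended by zero along `f` and `g`. -/
theorem IsHermitian.exists_dotProduct_eq_schur {M : Matrix n n ℝ} (hM : M.IsHermitian)
    {f : m → n} {g : p → n} (hf : Function.Injective f) (hfg : ∀ i j, f i ≠ g j)
    (hG : IsUnit (M.submatrix g g).det) (x : m → ℝ) :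
    ∃ y : n → ℝ, ((1 : Matrix n n ℝ).submatrix id f *ᵥ x) ⬝ᵥ y = x ⬝ᵥ x ∧
      y ⬝ᵥ (M *ᵥ y) = x ⬝ᵥ ((M.submatrix f f -
        M.submatrix f g * (M.submatrix g g)⁻¹ * M.submatrix g f) *ᵥ x) := by
  set P : Matrix n m ℝ := (1 : Matrix n n ℝ).submatrix id f
  set Q : Matrix n p ℝ := (1 : Matrix n n ℝ).submatrix id g
  set w := (M.submatrix g g)⁻¹ *ᵥ (M.submatrix g f *ᵥ x)
  have hw : M.submatrix g g *ᵥ w = M.submatrix g f *ᵥ x := by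
    rw [mulVec_mulVec, mul_nonsing_inv _ hG, one_mulVec]
  have hPP : (P *ᵥ x) ⬝ᵥ (P *ᵥ x) = x ⬝ᵥ x := submatrix_one_mulVec_dotProduct_self hf x
  have hPQ : (P *ᵥ x) ⬝ᵥ (Q *ᵥ w) = 0 := by
    have h1g : (1 : Matrix n n ℝ).submatrix f g = 0 := by
      ext i j
      simp [hfg i j]
    simpa [h1g] using (dotProduct_submatrix_mulVec 1 f g x w).symm
  refine ⟨P *ᵥ x - Q *ᵥ w, by rw [dotProduct_sub, hPP, hPQ, sub_zero], ?_⟩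
  have hQP : (Q *ᵥ w) ⬝ᵥ (M *ᵥ (P *ᵥ x)) = (P *ᵥ x) ⬝ᵥ (M *ᵥ (Q *ᵥ w)) :=
    hM.dotProduct_mulVec_comm _ _
  have hQQ : (Q *ᵥ w) ⬝ᵥ (M *ᵥ (Q *ᵥ w)) = (P *ᵥ x) ⬝ᵥ (M *ᵥ (Q *ᵥ w)) := by
    rw [← dotProduct_submatrix_mulVec, hw, dotProduct_submatrix_mulVec, hQP]
  rw [mulVec_sub, dotProduct_sub, sub_dotProduct, sub_dotProduct, hQP, hQQ, sub_self, sub_zero,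
    ← dotProduct_submatrix_mulVec, ← dotProduct_submatrix_mulVec, sub_mulVec, dotProduct_sub,
    ← mulVec_mulVec, ← mulVec_mulVec]

end ExtendByZero

end Matrix

section Blocks

variable (b : Fin N → Fin q) {Θ : Matrix (Fin N) (Fin N) ℝ}

theorem thetaK_posDef (hΘ : Θ.PosDef) (k : Fin q) : (thetaK b Θ k).PosDef :=
  hΘ.submatrix Subtype.val_injective

def blockInclusion (k : Fin q) : {i : Fin N // b i = k} → {i : Fin N // b i ≤ k} :=
  Subtype.map id fun _ => le_of_eq

def levelInclusion {k' k : Fin q} (h : k' ≤ k) :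
    {i : Fin N // b i ≤ k'} → {i : Fin N // b i ≤ k} :=
  Subtype.map id fun _ hi => hi.trans h

theorem BK_eq_submatrix (k : Fin q) :
    BK b Θ k = (thetaK b Θ k)⁻¹.submatrix (blockInclusion b k) (blockInclusion b k) :=
  rfl

theorem blockInclusion_injective (k : Fin q) : Function.Injective (blockInclusion b k) :=
  Subtype.map_injective _ Function.injective_id

theorem BK_isHermitian (hΘ : Θ.PosDef) (k : Fin q) : (BK b Θ k).IsHermitian := by
  rw [BK_eq_submatrix]
  exact (thetaK_posDef b hΘ k).inv.isHermitian.submatrix _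

theorem dotProduct_BK_mulVec_le (hΘ : Θ.PosDef) {k : Fin q} {c : ℝ} (hc : 0 < c)
    (h : (thetaK b Θ k - c • 1).PosSemidef) (x : {i : Fin N // b i = k} → ℝ) :
    x ⬝ᵥ (BK b Θ k *ᵥ x) ≤ c⁻¹ * (x ⬝ᵥ x) := by
  rw [BK_eq_submatrix, dotProduct_submatrix_mulVec,
    ← submatrix_one_mulVec_dotProduct_self (blockInclusion_injective b k) x]
  exact (thetaK_posDef b hΘ k).dotProduct_inv_mulVec_le hc h _

theorem le_dotProduct_BK_mulVec (hΘ : Θ.PosDef) {k : Fin q} {D : ℝ} (hD : 0 < D)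
    {x : {i : Fin N // b i = k} → ℝ}
    (hy : ∃ y, ((1 : Matrix _ _ ℝ).submatrix id (blockInclusion b k) *ᵥ x) ⬝ᵥ y = x ⬝ᵥ x ∧
      y ⬝ᵥ (thetaK b Θ k *ᵥ y) ≤ D * (x ⬝ᵥ x)) :
    D⁻¹ * (x ⬝ᵥ x) ≤ x ⬝ᵥ (BK b Θ k *ᵥ x) := by
  obtain ⟨y, hxy, hyy⟩ := hy
  rw [BK_eq_submatrix, dotProduct_submatrix_mulVec]
  exact (thetaK_posDef b hΘ k).le_dotProduct_inv_mulVec hD hxy hyy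

theorem exists_testVector_of_diag {k : Fin q} {D : ℝ}
    (h : (D • (1 : Matrix {i : Fin N // b i = k} {i : Fin N // b i = k} ℝ) -
      Θ.submatrix Subtype.val Subtype.val).PosSemidef) (x : {i : Fin N // b i = k} → ℝ) :
    ∃ y, ((1 : Matrix _ _ ℝ).submatrix id (blockInclusion b k) *ᵥ x) ⬝ᵥ y = x ⬝ᵥ x ∧
      y ⬝ᵥ (thetaK b Θ k *ᵥ y) ≤ D * (x ⬝ᵥ x) :=
  ⟨_, submatrix_one_mulVec_dotProduct_self (blockInclusion_injective b k) x, by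
    rw [← dotProduct_submatrix_mulVec]
    exact h.dotProduct_mulVec_le_of_smul_one_sub x⟩

theorem exists_testVector_of_schur (hΘ : Θ.PosDef) {k' k : Fin q} (hk : k' < k) {D : ℝ}
    (h : (D • 1 - schurLK b Θ k' k).PosSemidef) (x : {i : Fin N // b i = k} → ℝ) :
    ∃ y, ((1 : Matrix _ _ ℝ).submatrix id (blockInclusion b k) *ᵥ x) ⬝ᵥ y = x ⬝ᵥ x ∧
      y ⬝ᵥ (thetaK b Θ k *ᵥ y) ≤ D * (x ⬝ᵥ x) := by
  have hdisj : ∀ i j, blockInclusion b k i ≠ levelInclusion b hk.le j := fun i j hij => by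
    have hij : i.1 = j.1 := congrArg Subtype.val hij
    have hj := j.2
    rw [← hij, i.2] at hj
    exact hk.not_ge hj
  have hG : IsUnit (thetaK b Θ k').det :=
    (isUnit_iff_isUnit_det _).mp (thetaK_posDef b hΘ k').isUnit
  obtain ⟨y, hxy, hyy⟩ := (thetaK_posDef b hΘ k).isHermitian.exists_dotProduct_eq_schur
    (blockInclusion_injective b k) hdisj hG x
  exact ⟨y, hxy, hyy ▸ h.dotProduct_mulVec_le_of_smul_one_sub x⟩

theorem BK_lower_bound (hΘ : Θ.PosDef) {H CΦ : ℝ} (hH : 0 < H) (hCΦ : 0 < CΦ) {k : Fin q}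
    (h_diag : (CΦ • (1 : Matrix {i : Fin N // b i = k} {i : Fin N // b i = k} ℝ) -
      Θ.submatrix Subtype.val Subtype.val).PosSemidef)
    (h_schur : ∀ k' : Fin q, k' < k →
      ((CΦ * H ^ (2 * ((k' : ℕ) + 1))) • 1 - schurLK b Θ k' k).PosSemidef)
    (x : {i : Fin N // b i = k} → ℝ) :
    CΦ⁻¹ * (H ^ (2 * (k : ℕ)))⁻¹ * (x ⬝ᵥ x) ≤ x ⬝ᵥ (BK b Θ k *ᵥ x) := by
  rw [← mul_inv]
  refine le_dotProduct_BK_mulVec b hΘ (by positivity) ?_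
  rcases Nat.eq_zero_or_pos k with hk | hk
  · exact exists_testVector_of_diag b (by simpa [hk] using h_diag) x
  · let k' : Fin q := ⟨k - 1, by omega⟩
    have hk' : k' < k := Fin.lt_def.mpr (by simp only [k']; omega)
    have hk'k : (k' : ℕ) + 1 = k := by simp only [k']; omega
    exact exists_testVector_of_schur b hΘ hk' (hk'k ▸ h_schur k' hk') x

end Blocks

theorem loewner_bounds_BK_general
    (b : Fin N → Fin q)
    (Θ : Matrix (Fin N) (Fin N) ℝ) (hΘ : Θ.PosDef)
    (H CΦ : ℝ) (hH : H ∈ Set.Ioo (0 : ℝ) 1) (hCΦ : 1 ≤ CΦ)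
    (h_min : ∀ k : Fin q,
      (thetaK b Θ k - (H ^ (2 * ((k : ℕ) + 1)) / CΦ) • 1).PosSemidef)
    (h_diag : ∀ l : Fin q,
      (CΦ • (1 : Matrix {i : Fin N // b i = l} {i : Fin N // b i = l} ℝ) -
        Θ.submatrix Subtype.val Subtype.val).PosSemidef)
    (h_schur : ∀ k l : Fin q, k < l →
      ((CΦ * H ^ (2 * ((k : ℕ) + 1))) • 1 - schurLK b Θ k l).PosSemidef) :
    ∀ k : Fin q,
      (BK b Θ k - (CΦ⁻¹ * (H ^ (2 * (k : ℕ)))⁻¹) • 1).PosSemidef ∧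
      ((CΦ * (H ^ (2 * ((k : ℕ) + 1)))⁻¹) • 1 - BK b Θ k).PosSemidef ∧
      (∀ x y : {i : Fin N // b i = k} → ℝ,
        (∑ i, x i ^ 2) = 1 → (∑ i, y i ^ 2) = 1 →
        x ⬝ᵥ (BK b Θ k *ᵥ x) ≤ (H ^ 2)⁻¹ * CΦ ^ 2 * (y ⬝ᵥ (BK b Θ k *ᵥ y))) := by
  intro k
  have hH0 : 0 < H := hH.1
  have hCΦ0 : 0 < CΦ := one_pos.trans_le hCΦ
  have hlow := BK_lower_bound b hΘ hH0 hCΦ0 (h_diag k) (fun k' hk' => h_schur k' k hk')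
  have hup : ∀ x, x ⬝ᵥ (BK b Θ k *ᵥ x) ≤ CΦ * (H ^ (2 * ((k : ℕ) + 1)))⁻¹ * (x ⬝ᵥ x) := by
    simpa [inv_div, div_eq_mul_inv] using dotProduct_BK_mulVec_le b hΘ (by positivity) (h_min k)
  have hκ : CΦ * (H ^ (2 * ((k : ℕ) + 1)))⁻¹ / (CΦ⁻¹ * (H ^ (2 * (k : ℕ)))⁻¹) =
      (H ^ 2)⁻¹ * CΦ ^ 2 := by
    field_simp
    ring
  have hsq : ∀ x : {i : Fin N // b i = k} → ℝ, ∑ i, x i ^ 2 = x ⬝ᵥ x := fun x => by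
    simp [dotProduct, sq]
  refine ⟨(BK_isHermitian b hΘ k).posSemidef_sub_smul_one hlow,
    (BK_isHermitian b hΘ k).posSemidef_smul_one_sub hup, fun x y hx hy => ?_⟩
  rw [← hκ]
  exact dotProduct_mulVec_le_div_mul_of_bounds (by positivity) hlow hup
    (hsq x ▸ hx) (hsq y ▸ hy)

/-- Loewner bounds `C_Φ⁻¹ H^{−2(k−1)} Id ≼ B⁽ᵏ⁾ ≼ C_Φ H^{−2k} Id`
and the condition-number bound `cond(B⁽ᵏ⁾) ≤ κ := H⁻² C_Φ²`.
(Here `k : Fin q` is the `0`-based version of the `1`-based level `k+1`.) -/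
theorem loewner_bounds_BK
    (b : Fin N → Fin q) (hb : Monotone b)
    (Θ : Matrix (Fin N) (Fin N) ℝ) (hΘ : Θ.PosDef)
    (H CΦ : ℝ) (hH : H ∈ Set.Ioo (0 : ℝ) 1) (hCΦ : 1 ≤ CΦ)
    (h_min : ∀ k : Fin q,
      (thetaK b Θ k - (H ^ (2 * ((k : ℕ) + 1)) / CΦ) • 1).PosSemidef)
    (h_diag : ∀ l : Fin q,
      (CΦ • (1 : Matrix {i : Fin N // b i = l} {i : Fin N // b i = l} ℝ) -
        Θ.submatrix Subtype.val Subtype.val).PosSemidef)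
    (h_schur : ∀ k l : Fin q, k < l →
      ((CΦ * H ^ (2 * ((k : ℕ) + 1))) • 1 - schurLK b Θ k l).PosSemidef) :
    ∀ k : Fin q,
      (BK b Θ k - (CΦ⁻¹ * (H ^ (2 * (k : ℕ)))⁻¹) • 1).PosSemidef ∧
      ((CΦ * (H ^ (2 * ((k : ℕ) + 1)))⁻¹) • 1 - BK b Θ k).PosSemidef ∧
      (∀ x y : {i : Fin N // b i = k} → ℝ,
        (∑ i, x i ^ 2) = 1 → (∑ i, y i ^ 2) = 1 →
        x ⬝ᵥ (BK b Θ k *ᵥ x) ≤ (H ^ 2)⁻¹ * CΦ ^ 2 * (y ⬝ᵥ (BK b Θ k *ᵥ y))) :=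
  loewner_bounds_BK_general b Θ hΘ H CΦ hH hCΦ h_min h_diag h_schur
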